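/- (Standardization compatibility of insertion) Let T be a semistandard (X,λ)-tableau and T• a •-standardization of T. Let y ∈ X• satisfy: x ≺ y for every x occurring in T• with the same underlying letter as y, if ε + parity(y) = 0; and x ≻ y for all such x, if ε + parity(y) = 1. Then (T• ←ε y) is a •-standardization of (T ←ε ŷ), where ŷ is the underlying letter of y, and the two insertions have identical bumped node sequences. -/

import Mathlib

/-!
In a `•`-standardization the `≺` condition says that the superscripts of each letter increase
along its strip (horizontal for even letters, vertical for odd ones), and the hypothesis on `y`
says that `y` is larger (strict insertion) or smaller (weak insertion) than every copy of its
letter. This tie-breaking propagates to every bumped letter, so at each step the comparisons on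
the insertion line give the same answers in `U` and in `T`: both insertions bump the same nodes,
and their letters differ only by superscripts. The result is again strip-ordered because a
bumped letter moves from `b (k - 1)` to `b k` without passing another copy of itself along its
strip, while equal letters bumped in one (necessarily weak) insertion advance along their strip
in the order in which they are bumped.
-/

namespace SuperRSK

variable {X Y : Type*}

/-- The super order `≺` on a superalphabet: `a ≺ b` iff (`a` odd, `b` even), or
(both even and `a < b`), or (both odd and `a > b`). Odd means parity `true`. -/
def SuperPrec [LinearOrder X] (par : X → Bool) (a b : X) : Prop :=
  (par a = true ∧ par b = false) ∨
  (par a = false ∧ par b = false ∧ a < b) ∨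
  (par a = true ∧ par b = true ∧ b < a)

/-- The `δ`-coordinate of a node: row if `δ = false`, column if `δ = true`. -/
def coord (δ : Bool) (u : ℕ × ℕ) : ℕ := if δ then u.2 else u.1

/-- A tableau is a function `ℕ × ℕ → WithTop X`, equal to `⊤` outside its diagram.
Semistandard: the support is a Young diagram and entries are non-decreasing
(both encoded by monotonicity into `WithTop X`), equal entries in a row are even,
and equal entries in a column are odd. -/
def IsSStd [LinearOrder X] (par : X → Bool) (T : ℕ × ℕ → WithTop X) : Prop :=
  (∀ u v : ℕ × ℕ, u.1 ≤ v.1 → u.2 ≤ v.2 → T u ≤ T v) ∧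
  (∀ u v : ℕ × ℕ, ∀ a : X, u.1 = v.1 → u.2 < v.2 → T u = (a : WithTop X) →
    T v = (a : WithTop X) → par a = false) ∧
  (∀ u v : ℕ × ℕ, ∀ a : X, u.2 = v.2 → u.1 < v.1 → T u = (a : WithTop X) →
    T v = (a : WithTop X) → par a = true)

/-- A standard tableau: semistandard with no repeated letters. -/
def IsStd [LinearOrder X] (par : X → Bool) (T : ℕ × ℕ → WithTop X) : Prop :=
  IsSStd par T ∧
  ∀ u v : ℕ × ℕ, ∀ a : X, T u = (a : WithTop X) → T v = (a : WithTop X) → u = v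

/-- The comparison used in `ε`-insertion: strict for `ε = false`, weak for `ε = true`. -/
def cmpIns [LinearOrder X] (ε : Bool) (x : X) (v : WithTop X) : Prop :=
  if ε then (x : WithTop X) ≤ v else (x : WithTop X) < v

/-- The comparison used in `ε`-extraction: strict for `ε = false`, weak for `ε = true`. -/
def cmpExt [LinearOrder X] (ε : Bool) (y : X) (v : WithTop X) : Prop :=
  if ε then v ≤ (y : WithTop X) else v < (y : WithTop X)

/-- `BumpSeq ε par T x b xs m` says `b 0, …, b (m-1)` is the bumped node sequence and
`xs 0, …, xs (m-1)` the bumped letter sequence for the `ε`-insertion of `x` into `T`: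
`xs 0 = x`; at step `j` the current letter `xs j` is placed at the smallest node `b j`
of the `i`-th row (if `ε + parity (xs j) = 0`) or column (if `= 1`) satisfying the
`ε`-comparison, where `i = 0` at the start and afterwards is one more than the
corresponding coordinate of the previous bumped node; the bumped letter becomes the
next inserted letter, until an empty node (`⊤`) is reached. -/
def BumpSeq [LinearOrder X] (ε : Bool) (par : X → Bool) (T : ℕ × ℕ → WithTop X)
    (x : X) (b : ℕ → ℕ × ℕ) (xs : ℕ → X) (m : ℕ) : Prop :=
  0 < m ∧ xs 0 = x ∧
  (∀ j, j + 1 < m → T (b j) = (xs (j + 1) : WithTop X)) ∧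
  T (b (m - 1)) = ⊤ ∧
  ∀ j, j < m →
    (coord (Bool.xor ε (par (xs j))) (b j) =
      (if j = 0 then 0 else coord (Bool.xor ε (par (xs j))) (b (j - 1)) + 1)) ∧
    cmpIns ε (xs j) (T (b j)) ∧
    ∀ v : ℕ × ℕ,
      coord (Bool.xor ε (par (xs j))) v = coord (Bool.xor ε (par (xs j))) (b j) →
      cmpIns ε (xs j) (T v) →
      coord (!(Bool.xor ε (par (xs j)))) (b j) ≤ coord (!(Bool.xor ε (par (xs j)))) v

/-- `InsResult T b xs m R` says `R` is the tableau obtained from `T` by the insertion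
with bumped nodes `b` and bumped letters `xs`: `R (b k) = xs k` and `R` agrees with `T`
elsewhere. -/
def InsResult [LinearOrder X] (T : ℕ × ℕ → WithTop X) (b : ℕ → ℕ × ℕ) (xs : ℕ → X)
    (m : ℕ) (R : ℕ × ℕ → WithTop X) : Prop :=
  (∀ k, k < m → R (b k) = (xs k : WithTop X)) ∧
  ∀ u : ℕ × ℕ, (∀ k, k < m → u ≠ b k) → R u = T u

/-- `ExtractSeq ε par T u c ys m` says `c 0, …, c (m-1)` is the unbumped node sequence
and `ys 0, …, ys (m-1)` the unbumped letter sequence for the `ε`-extraction at `u`: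
`c 0 = u`, `ys 0 = T u`; at each step `c (j+1)` is the greatest node, in the row/column
(according to `ε` plus the parity of `ys j`) preceding that of `c j`, whose entry is
`ε`-below `ys j`; the process stops upon reaching the first row/column. -/
def ExtractSeq [LinearOrder X] (ε : Bool) (par : X → Bool) (T : ℕ × ℕ → WithTop X)
    (u : ℕ × ℕ) (c : ℕ → ℕ × ℕ) (ys : ℕ → X) (m : ℕ) : Prop :=
  0 < m ∧ c 0 = u ∧ T u = (ys 0 : WithTop X) ∧
  (∀ j, j + 1 < m →
    0 < coord (Bool.xor ε (par (ys j))) (c j) ∧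
    coord (Bool.xor ε (par (ys j))) (c (j + 1)) + 1 =
      coord (Bool.xor ε (par (ys j))) (c j) ∧
    T (c (j + 1)) = (ys (j + 1) : WithTop X) ∧
    cmpExt ε (ys j) (T (c (j + 1))) ∧
    ∀ v : ℕ × ℕ,
      coord (Bool.xor ε (par (ys j))) v + 1 = coord (Bool.xor ε (par (ys j))) (c j) →
      cmpExt ε (ys j) (T v) →
      coord (!(Bool.xor ε (par (ys j)))) v ≤ coord (!(Bool.xor ε (par (ys j)))) (c (j + 1))) ∧
  coord (Bool.xor ε (par (ys (m - 1)))) (c (m - 1)) = 0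

/-- `ExtResult T c ys m R` says `R` is the tableau obtained from `T` by the extraction
with unbumped nodes `c` and letters `ys`: each `c k` (`k ≥ 1`) receives `ys (k-1)`, the
initial node `c 0` is emptied, and `R` agrees with `T` elsewhere. -/
def ExtResult [LinearOrder X] (T : ℕ × ℕ → WithTop X) (c : ℕ → ℕ × ℕ) (ys : ℕ → X)
    (m : ℕ) (R : ℕ × ℕ → WithTop X) : Prop :=
  (∀ k, 0 < k → k < m → R (c k) = (ys (k - 1) : WithTop X)) ∧
  (∀ v : ℕ × ℕ, (∀ k, k < m → v ≠ c k) → R v = T v) ∧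
  ((∀ k, 0 < k → k < m → c 0 ≠ c k) → R (c 0) = ⊤)

/-- The parity function on the standardizing alphabet `X• = X ×ₗ ℕ` (with the
lexicographic order): superscripts do not change parity. -/
def bpar (par : X → Bool) (p : X ×ₗ ℕ) : Bool := par (ofLex p).1

/-- `U` is a `•`-standardization of `T`: `U` is a standard tableau over the
standardizing alphabet, forgetting superscripts in `U` yields the semistandard
tableau `T`, and whenever `u ↗ v` are distinct nodes with `T u = T v`, then
`U u ≺ U v` in the super order on `X•`. -/
def IsBulletStd [LinearOrder X] (par : X → Bool)
    (U : ℕ × ℕ → WithTop (X ×ₗ ℕ)) (T : ℕ × ℕ → WithTop X) : Prop :=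
  IsStd (bpar par) U ∧
  IsSStd par T ∧
  (∀ u : ℕ × ℕ, (U u).map (fun p => (ofLex p).1) = T u) ∧
  (∀ u v : ℕ × ℕ, ∀ p q : X ×ₗ ℕ, u ≠ v → v.1 ≤ u.1 → u.2 ≤ v.2 →
     U u = (p : WithTop (X ×ₗ ℕ)) → U v = (q : WithTop (X ×ₗ ℕ)) →
     (ofLex p).1 = (ofLex q).1 → SuperPrec (bpar par) p q)

section Tableaux

variable {A : Type*} [LinearOrder A] {par : A → Bool} {T : ℕ × ℕ → WithTop A}

def node (d : Bool) (i j : ℕ) : ℕ × ℕ := if d then (j, i) else (i, j)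

@[simp] lemma coord_node (d : Bool) (i j : ℕ) : coord d (node d i j) = i := by
  cases d <;> rfl

@[simp] lemma coord_not_node (d : Bool) (i j : ℕ) : coord (!d) (node d i j) = j := by
  cases d <;> rfl

lemma ext_coord {d : Bool} {u v : ℕ × ℕ} (h : coord d u = coord d v)
    (h' : coord (!d) u = coord (!d) v) : u = v := by
  cases d <;> simp only [coord, Bool.not_false, Bool.not_true, Bool.false_eq_true,
    if_true, if_false] at h h' <;> exact Prod.ext (by omega) (by omega)

lemma le_of_coord_le {d : Bool} {u v : ℕ × ℕ} (h : coord d u ≤ coord d v)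
    (h' : coord (!d) u ≤ coord (!d) v) : u ≤ v := by
  cases d <;> simp only [coord, Bool.not_false, Bool.not_true, Bool.false_eq_true,
    if_true, if_false] at h h' <;> exact Prod.le_def.2 ⟨by omega, by omega⟩

lemma coord_le_coord (d : Bool) {u v : ℕ × ℕ} (h : u ≤ v) : coord d u ≤ coord d v := by
  cases d
  · exact h.1
  · exact h.2

lemma IsSStd.monotone (hT : IsSStd par T) : Monotone T := fun u v h => hT.1 u v h.1 h.2

lemma IsSStd.par_eq (hT : IsSStd par T) {e : Bool} {u v : ℕ × ℕ} {a : A}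
    (hu : T u = a) (hv : T v = a) (h : coord e u = coord e v)
    (h' : coord (!e) u < coord (!e) v) : par a = e := by
  cases e
  · exact hT.2.1 u v a h h' hu hv
  · exact hT.2.2 u v a h h' hu hv

lemma IsSStd.false_of_lt_of_lt (hT : IsSStd par T) (d : Bool) {u v : ℕ × ℕ} {a : A}
    (hu : T u = a) (hv : T v = a) (h : coord d u < coord d v)
    (h' : coord (!d) u < coord (!d) v) : False := by
  set w := node d (coord d u) (coord (!d) v)
  have hw : T w = a := le_antisymm
    (hv ▸ hT.monotone (le_of_coord_le (d := d) (by simp [w]; omega) (by simp [w])))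
    (hu ▸ hT.monotone (le_of_coord_le (d := d) (by simp [w]) (by simp [w]; omega)))
  have h1 : par a = d := hT.par_eq hu hw (by simp [w]) (by simpa [w] using h')
  have h2 : par a = !d := hT.par_eq hw hv (by simp [w]) (by simpa [w] using h)
  simp [h1] at h2

lemma IsSStd.coord_ne (hT : IsSStd par T) {u v : ℕ × ℕ} {a : A} (hu : T u = a)
    (hv : T v = a) (huv : u ≠ v) : coord (!par a) u ≠ coord (!par a) v := by
  intro h
  have hne : coord (par a) u ≠ coord (par a) v := fun h' => huv (ext_coord h' h)
  rcases Nat.lt_or_gt_of_ne hne with hlt | hlt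
  · have := hT.par_eq hu hv h (by simpa using hlt)
    simp at this
  · have := hT.par_eq hv hu h.symm (by simpa using hlt)
    simp at this

lemma IsSStd.coord_lt_of_coord_lt (hT : IsSStd par T) {u v : ℕ × ℕ} {a : A}
    (hu : T u = a) (hv : T v = a) (h : coord (par a) u < coord (par a) v) :
    coord (!par a) v < coord (!par a) u := by
  rcases lt_trichotomy (coord (!par a) u) (coord (!par a) v) with h' | h' | h'
  · exact (hT.false_of_lt_of_lt (par a) hu hv h h').elim
  · exact absurd h' (hT.coord_ne hu hv (by rintro rfl; exact lt_irrefl _ h))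
  · exact h'

lemma cmpIns_false {x : A} {v : WithTop A} : cmpIns false x v ↔ (x : WithTop A) < v := by
  simp [cmpIns]

lemma cmpIns_true {x : A} {v : WithTop A} : cmpIns true x v ↔ (x : WithTop A) ≤ v := by
  simp [cmpIns]

lemma le_of_cmpIns {ε : Bool} {x : A} {v : WithTop A} (h : cmpIns ε x v) :
    (x : WithTop A) ≤ v := by
  cases ε
  · exact (cmpIns_false.1 h).le
  · exact cmpIns_true.1 h

lemma cmpIns_of_lt {ε : Bool} {x : A} {v : WithTop A} (h : (x : WithTop A) < v) :
    cmpIns ε x v := by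
  cases ε
  · exact cmpIns_false.2 h
  · exact cmpIns_true.2 h.le

lemma le_of_not_cmpIns {ε : Bool} {x : A} {v : WithTop A} (h : ¬ cmpIns ε x v) :
    v ≤ (x : WithTop A) :=
  not_lt.1 fun h' => h (cmpIns_of_lt h')

lemma cmpIns_top (ε : Bool) (x : A) : cmpIns ε x ⊤ := cmpIns_of_lt (WithTop.coe_lt_top x)

end Tableaux

namespace BumpSeq

variable {A : Type*} [LinearOrder A] {par : A → Bool} {T : ℕ × ℕ → WithTop A}
  {ε : Bool} {x : A} {b : ℕ → ℕ × ℕ} {xs : ℕ → A} {m : ℕ}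

lemma pos (h : BumpSeq ε par T x b xs m) : 0 < m := h.1

lemma first (h : BumpSeq ε par T x b xs m) : xs 0 = x := h.2.1

lemma bump (h : BumpSeq ε par T x b xs m) {j : ℕ} (hj : j + 1 < m) :
    T (b j) = xs (j + 1) := h.2.2.1 j hj

lemma last (h : BumpSeq ε par T x b xs m) : T (b (m - 1)) = ⊤ := h.2.2.2.1

lemma cmp (h : BumpSeq ε par T x b xs m) {j : ℕ} (hj : j < m) :
    cmpIns ε (xs j) (T (b j)) := (h.2.2.2.2 j hj).2.1

lemma coord_zero (h : BumpSeq ε par T x b xs m) {d : Bool}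
    (hd : Bool.xor ε (par (xs 0)) = d) : coord d (b 0) = 0 := by
  subst hd; simpa using (h.2.2.2.2 0 h.pos).1

lemma coord_succ (h : BumpSeq ε par T x b xs m) {j : ℕ} {d : Bool} (hj : j + 1 < m)
    (hd : Bool.xor ε (par (xs (j + 1))) = d) : coord d (b (j + 1)) = coord d (b j) + 1 := by
  subst hd; simpa using (h.2.2.2.2 (j + 1) hj).1

lemma min (h : BumpSeq ε par T x b xs m) {j : ℕ} {d : Bool} (hj : j < m)
    (hd : Bool.xor ε (par (xs j)) = d) {v : ℕ × ℕ} (hv : coord d v = coord d (b j))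
    (hc : cmpIns ε (xs j) (T v)) : coord (!d) (b j) ≤ coord (!d) v := by
  subst hd; exact (h.2.2.2.2 j hj).2.2 v hv hc

lemma congr {b' : ℕ → ℕ × ℕ} {xs' : ℕ → A} (h : BumpSeq ε par T x b xs m)
    (hb : ∀ j < m, b j = b' j) (hx : ∀ j < m, xs j = xs' j) : BumpSeq ε par T x b' xs' m := by
  obtain ⟨hpos, h0, hbump, hlast, hstep⟩ := h
  refine ⟨hpos, hx 0 hpos ▸ h0, fun j hj => ?_, ?_, fun j hj => ?_⟩
  · rw [← hb j (by omega), ← hx (j + 1) hj]; exact hbump j hj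
  · rw [← hb (m - 1) (by omega)]; exact hlast
  · rw [← hb j hj, ← hx j hj, ← hb (j - 1) (by omega)]; exact hstep j hj

lemma xs_le (h : BumpSeq ε par T x b xs m) {k l : ℕ} (hkl : k ≤ l) (hl : l < m) :
    xs k ≤ xs l := by
  induction l, hkl using Nat.le_induction with
  | base => exact le_rfl
  | succ l hkl ih =>
    refine (ih (by omega)).trans (WithTop.coe_le_coe.1 ?_)
    rw [← h.bump hl]
    exact le_of_cmpIns (h.cmp (by omega))

lemma xs_lt_of_false (h : BumpSeq false par T x b xs m) {k l : ℕ} (hkl : k < l)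
    (hl : l < m) : xs k < xs l := by
  have hstep := h.cmp (j := k) (by omega)
  rw [h.bump (by omega), cmpIns_false, WithTop.coe_lt_coe] at hstep
  exact hstep.trans_le (h.xs_le hkl hl)

lemma coord_lt_of_eq (h : BumpSeq ε par T x b xs m) {k l : ℕ} (hkl : k < l) (hl : l < m)
    (heq : xs (k + 1) = xs l) :
    coord (Bool.xor ε (par (xs l))) (b k) < coord (Bool.xor ε (par (xs l))) (b l) := by
  induction l, (hkl : k + 1 ≤ l) using Nat.le_induction with
  | base => simp only [Nat.succ_eq_add_one, h.coord_succ hl rfl]; omega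
  | succ l hkl ih =>
    have hxl : xs l = xs (l + 1) :=
      le_antisymm (h.xs_le (by omega) hl) (heq ▸ h.xs_le hkl (by omega))
    have := ih (by omega) (heq.trans hxl.symm)
    rw [h.coord_succ hl rfl, ← hxl]
    omega

lemma eq_true_and_coord_lt (h : BumpSeq ε par T x b xs m) {k l : ℕ} (hkl : k < l)
    (hl : l < m) (heq : xs k = xs l) :
    ε = true ∧ coord (!par (xs l)) (b k) < coord (!par (xs l)) (b l) := by
  cases ε
  · exact absurd heq (h.xs_lt_of_false hkl hl).ne
  · refine ⟨rfl, ?_⟩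
    have hx : xs (k + 1) = xs l :=
      le_antisymm (h.xs_le hkl hl) (by rw [← heq]; exact h.xs_le k.le_succ (by omega))
    simpa using h.coord_lt_of_eq hkl hl hx

lemma coord_le_prev (hT : IsSStd par T) (h : BumpSeq ε par T x b xs m) {j : ℕ} {d : Bool}
    (hj : j + 1 < m) (hd : Bool.xor ε (par (xs (j + 1))) = d) :
    coord (!d) (b (j + 1)) ≤ coord (!d) (b j) := by
  set z := node d (coord d (b j) + 1) (coord (!d) (b j))
  have hz : (xs (j + 1) : WithTop A) ≤ T z :=
    h.bump hj ▸ hT.monotone (le_of_coord_le (d := d) (by simp [z]) (by simp [z]))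
  have hcmp : cmpIns ε (xs (j + 1)) (T z) := by
    cases ε
    · refine cmpIns_of_lt (lt_of_le_of_ne hz fun heq => ?_)
      have := hT.par_eq (h.bump hj) heq.symm (e := !d) (by simp [z]) (by simp [z])
      simp only [Bool.false_xor] at hd
      simp [hd] at this
    · exact cmpIns_true.2 hz
  simpa [z] using h.min hj hd (v := z) (by simp [z, h.coord_succ hj hd]) hcmp

lemma eq_of_le_prev (hT : IsSStd par T) (h : BumpSeq false par T x b xs m) {j : ℕ}
    {u : ℕ × ℕ} (hj : j + 1 < m) (hu : T u = xs (j + 1)) (hle : u ≤ b j) : u = b j := by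
  obtain ⟨e, he⟩ : ∃ e, Bool.xor false (par (xs j)) = e := ⟨_, rfl⟩
  have hlt : (xs j : WithTop A) < T u := by
    rw [hu, ← h.bump hj]; exact cmpIns_false.1 (h.cmp (by omega))
  have hcol : coord (!e) (b j) ≤ coord (!e) u := by
    set w := node e (coord e (b j)) (coord (!e) u)
    have huw : T u ≤ T w :=
      hT.monotone (le_of_coord_le (d := e) (by simpa [w] using coord_le_coord e hle) (by simp [w]))
    simpa [w] using h.min (by omega) he (v := w) (by simp [w]) (cmpIns_of_lt (hlt.trans_le huw))
  -- otherwise `u` would lie weakly before `b (j - 1)`, which holds the smaller letter `xs j`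
  have hrow : ¬ coord e u < coord e (b j) := by
    intro hrow
    obtain _ | i := j
    · have := h.coord_zero he; omega
    · have h1 := h.coord_succ (by omega) he
      have h2 := h.coord_le_prev hT (by omega) he
      have h3 := coord_le_coord (!e) hle
      have := hT.monotone (le_of_coord_le (d := e) (u := u) (v := b i) (by omega) (by omega))
      rw [h.bump (by omega)] at this
      exact this.not_gt hlt
  exact ext_coord (le_antisymm (coord_le_coord e hle) (not_lt.1 hrow))
    (le_antisymm (coord_le_coord _ hle) hcol)

end BumpSeq

section Insertion

variable {A : Type*} [LinearOrder A] {par : A → Bool} {T R : ℕ × ℕ → WithTop A}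
  {ε : Bool} {x : A} {b : ℕ → ℕ × ℕ} {xs : ℕ → A} {m : ℕ}

lemma InsResult.cases (hR : InsResult T b xs m R) (u : ℕ × ℕ) :
    (∃ k < m, u = b k ∧ R u = xs k) ∨ ((∀ k < m, u ≠ b k) ∧ R u = T u) := by
  by_cases hu : ∃ k < m, u = b k
  · obtain ⟨k, hk, rfl⟩ := hu
    exact Or.inl ⟨k, hk, rfl, hR.1 k hk⟩
  · push Not at hu
    exact Or.inr ⟨hu, hR.2 u hu⟩

lemma InsResult.congr {b' : ℕ → ℕ × ℕ} {xs' : ℕ → A} (hR : InsResult T b xs m R)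
    (hb : ∀ j < m, b j = b' j) (hx : ∀ j < m, xs j = xs' j) : InsResult T b' xs' m R :=
  ⟨fun k hk => hb k hk ▸ hx k hk ▸ hR.1 k hk,
    fun u hu => hR.2 u fun k hk => hb k hk ▸ hu k hk⟩

namespace BumpSeq

lemma insResult_le (h : BumpSeq ε par T x b xs m) (hR : InsResult T b xs m R) (u : ℕ × ℕ) :
    R u ≤ T u := by
  rcases hR.cases u with ⟨k, hk, rfl, hu⟩ | ⟨-, hu⟩
  · exact hu ▸ le_of_cmpIns (h.cmp hk)
  · exact hu.le

lemma le_of_le_bumped (hT : IsSStd par T) (h : BumpSeq ε par T x b xs m) {k : ℕ}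
    {u : ℕ × ℕ} (hk : k < m) (hle : u ≤ b k) (hne : u ≠ b k) : T u ≤ xs k := by
  obtain ⟨d, hd⟩ : ∃ d, Bool.xor ε (par (xs k)) = d := ⟨_, rfl⟩
  have before : ∀ v, coord d v = coord d (b k) → coord (!d) v < coord (!d) (b k) →
      T v ≤ xs k :=
    fun v hv hlt => le_of_not_cmpIns fun hc => (h.min hk hd hv hc).not_gt hlt
  rcases (coord_le_coord d hle).lt_or_eq with hlt | heq
  · obtain _ | i := k
    · have := h.coord_zero hd; omega
    · rcases (coord_le_coord (!d) hle).lt_or_eq with hlt' | heq'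
      · set z := node d (coord d (b (i + 1))) (coord (!d) u)
        have huz : u ≤ z := le_of_coord_le (d := d) (by simp [z]; omega) (by simp [z])
        exact (hT.monotone huz).trans (before z (by simp [z]) (by simpa [z] using hlt'))
      · have h1 := h.coord_succ hk hd
        have h2 := h.coord_le_prev hT hk hd
        rw [← h.bump hk]
        exact hT.monotone (le_of_coord_le (d := d) (by omega) (by omega))
  · exact before u heq ((coord_le_coord _ hle).lt_of_ne fun h' => hne (ext_coord heq h'))

lemma false_of_le_of_lt (hT : IsSStd par T) (h : BumpSeq ε par T x b xs m) {k l : ℕ}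
    (hkl : k < l) (hl : l < m) (hle : b l ≤ b k) : False := by
  have hTle : T (b l) ≤ xs (k + 1) := h.bump (j := k) (by omega) ▸ hT.monotone hle
  have hl1 : l + 1 < m := by
    by_contra hl1
    rw [show l = m - 1 by omega, h.last] at hTle
    exact WithTop.coe_ne_top (top_le_iff.1 hTle)
  rw [h.bump hl1, WithTop.coe_le_coe] at hTle
  have hx : xs (k + 1) = xs l :=
    le_antisymm (h.xs_le hkl hl) ((h.xs_le l.le_succ hl1).trans hTle)
  have := h.coord_lt_of_eq hkl hl hx
  have := coord_le_coord (Bool.xor ε (par (xs l))) hle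
  omega

lemma monotone_insResult (hT : IsSStd par T) (h : BumpSeq ε par T x b xs m)
    (hR : InsResult T b xs m R) : Monotone R := by
  intro u v huv
  rcases hR.cases v with ⟨k, hk, rfl, hv⟩ | ⟨-, hv⟩
  · rw [hv]
    rcases hR.cases u with ⟨l, hl, rfl, hu⟩ | ⟨hu, hu'⟩
    · rw [hu, WithTop.coe_le_coe]
      rcases le_or_gt l k with hlk | hkl
      · exact h.xs_le hlk hk
      · exact (h.false_of_le_of_lt hT hkl hl huv).elim
    · rw [hu']
      exact h.le_of_le_bumped hT hk huv (hu k hk)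
  · rw [hv]
    exact (h.insResult_le hR u).trans (hT.monotone huv)

lemma par_eq_of_copy_after (hT : IsSStd par T) (h : BumpSeq ε par T x b xs m) {e : Bool}
    {k : ℕ} {v : ℕ × ℕ} (hk : k < m) (hTv : T v = xs k) (h1 : coord e (b k) = coord e v)
    (h2 : coord (!e) (b k) < coord (!e) v) : par (xs k) = e := by
  have hle : T (b k) ≤ xs k := hTv ▸ hT.monotone (le_of_coord_le (d := e) h1.le h2.le)
  cases ε
  · exact ((cmpIns_false.1 (h.cmp hk)).trans_le hle).false.elim
  · exact hT.par_eq (le_antisymm hle (cmpIns_true.1 (h.cmp hk))) hTv h1 h2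

lemma par_eq_of_copy_before (hT : IsSStd par T) (h : BumpSeq ε par T x b xs m) {e : Bool}
    {l : ℕ} {u : ℕ × ℕ} (hl : l < m) (hTu : T u = xs l) (hub : ∀ j < m, u ≠ b j)
    (h1 : coord e u = coord e (b l)) (h2 : coord (!e) u < coord (!e) (b l)) :
    par (xs l) = e := by
  by_contra he
  obtain rfl : e = !par (xs l) := Bool.eq_not_iff.2 (Ne.symm he)
  simp only [Bool.not_not] at h2
  cases ε
  · obtain _ | i := l
    · have := h.coord_zero (d := par (xs 0)) (by simp)
      omega
    · have h3 := h.coord_succ hl (d := par (xs (i + 1))) (by simp)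
      have h4 := h.coord_le_prev hT hl (d := par (xs (i + 1))) (by simp)
      exact hub i (by omega) (h.eq_of_le_prev hT hl hTu (le_of_coord_le
        (d := par (xs (i + 1))) (by omega) (by omega)))
  · have := h.min hl (d := !par (xs l)) (by simp) h1 (cmpIns_true.2 hTu.ge)
    simp only [Bool.not_not] at this
    omega

lemma par_eq_of_insResult (hT : IsSStd par T) (h : BumpSeq ε par T x b xs m)
    (hR : InsResult T b xs m R) {e : Bool} {u v : ℕ × ℕ} {a : A} (hu : R u = a)
    (hv : R v = a) (h1 : coord e u = coord e v) (h2 : coord (!e) u < coord (!e) v) :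
    par a = e := by
  rcases hR.cases u with ⟨k, hk, rfl, hu'⟩ | ⟨hub, hu'⟩ <;>
    rcases hR.cases v with ⟨l, hl, rfl, hv'⟩ | ⟨hvb, hv'⟩
  · rw [hu', WithTop.coe_inj] at hu
    rw [hv', WithTop.coe_inj] at hv
    subst hu
    by_contra he
    rw [Bool.eq_not_iff.2 (Ne.symm he)] at h1
    rcases lt_trichotomy k l with hkl | rfl | hkl
    · exact (h.eq_true_and_coord_lt hkl hl hv.symm).2.ne (hv ▸ h1)
    · exact lt_irrefl _ h2
    · exact (h.eq_true_and_coord_lt hkl hk hv).2.ne' h1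
  · rw [hu', WithTop.coe_inj] at hu
    exact hu ▸ h.par_eq_of_copy_after hT hk (hu ▸ hv' ▸ hv) h1 h2
  · rw [hv', WithTop.coe_inj] at hv
    exact hv ▸ h.par_eq_of_copy_before hT hl (hv ▸ hu' ▸ hu) hub h1 h2
  · exact hT.par_eq (hu' ▸ hu) (hv' ▸ hv) h1 h2

lemma isSStd_insResult (hT : IsSStd par T) (h : BumpSeq ε par T x b xs m)
    (hR : InsResult T b xs m R) : IsSStd par R :=
  ⟨fun _ _ h1 h2 => h.monotone_insResult hT hR (Prod.le_def.2 ⟨h1, h2⟩),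
    fun _ _ _ h1 h2 hu hv => h.par_eq_of_insResult hT hR (e := false) hu hv h1 h2,
    fun _ _ _ h1 h2 hu hv => h.par_eq_of_insResult hT hR (e := true) hu hv h1 h2⟩

lemma xs_strictMono (h : BumpSeq ε par T x b xs m)
    (hinj : ∀ u v (a : A), T u = a → T v = a → u = v) (hx : ∀ u, T u ≠ x) {k l : ℕ}
    (hkl : k < l) (hl : l < m) : xs k < xs l := by
  have hstep : xs k ≤ xs (k + 1) := h.xs_le k.le_succ (by omega)
  refine (hstep.lt_of_ne fun heq => ?_).trans_le (h.xs_le hkl hl)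
  obtain _ | i := k
  · exact hx (b 0) (by rw [h.bump (by omega), ← heq, h.first])
  · have hbi : b i = b (i + 1) :=
      hinj _ _ _ (h.bump (by omega)) (by rw [h.bump (by omega), heq])
    have := h.coord_succ (j := i) (by omega) rfl
    rw [hbi] at this
    omega

lemma injective_insResult (h : BumpSeq ε par T x b xs m)
    (hinj : ∀ u v (a : A), T u = a → T v = a → u = v) (hx : ∀ u, T u ≠ x)
    (hR : InsResult T b xs m R) {u v : ℕ × ℕ} {a : A} (hu : R u = a) (hv : R v = a) :
    u = v := by
  have moved : ∀ w k, k < m → (∀ j < m, w ≠ b j) → T w ≠ xs k := by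
    intro w k hk hw hTw
    obtain _ | i := k
    · exact hx w (h.first ▸ hTw)
    · exact hw i (by omega) (hinj _ _ _ hTw (h.bump hk))
  rcases hR.cases u with ⟨k, hk, rfl, hu'⟩ | ⟨hub, hu'⟩ <;>
    rcases hR.cases v with ⟨l, hl, rfl, hv'⟩ | ⟨hvb, hv'⟩
  · have hkl : xs k = xs l := by rw [← WithTop.coe_inj, ← hu', ← hv', hu, hv]
    rcases lt_trichotomy k l with hlt | rfl | hlt
    · exact absurd hkl (h.xs_strictMono hinj hx hlt hl).ne
    · rfl
    · exact absurd hkl (h.xs_strictMono hinj hx hlt hk).ne'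
  · exact (moved v k hk hvb (by rw [← hv', hv, ← hu, hu'])).elim
  · exact (moved u l hl hub (by rw [← hu', hu, ← hv, hv'])).elim
  · exact hinj u v a (hu' ▸ hu) (hv' ▸ hv)

lemma prev_lt_of_lt (hT : IsSStd par T) (h : BumpSeq ε par T x b xs m) {k : ℕ}
    {v : ℕ × ℕ} (hk : k < m) (hv : T v = xs k) (hvb : ∀ j < m, v ≠ b j)
    (hlt : coord (!par (xs k)) (b k) < coord (!par (xs k)) v) :
    (k = 0 ∧ ε = true) ∨
      ∃ i, k = i + 1 ∧ coord (!par (xs k)) (b i) < coord (!par (xs k)) v := by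
  cases ε
  · have hd : Bool.xor false (par (xs k)) = par (xs k) := by simp
    have hrow : coord (par (xs k)) v < coord (par (xs k)) (b k) := by
      by_contra hge
      exact ((cmpIns_false.1 (h.cmp hk)).trans_le
        (hv ▸ hT.monotone (le_of_coord_le (not_lt.1 hge) hlt.le))).false
    obtain _ | i := k
    · have := h.coord_zero hd; omega
    · have := h.coord_succ hk hd
      exact Or.inr ⟨i, rfl, lt_of_not_ge fun hle => hvb i (by omega)
        (h.eq_of_le_prev hT hk hv (le_of_coord_le (by omega) hle))⟩
  · obtain _ | i := k
    · exact Or.inl ⟨rfl, rfl⟩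
    · have := h.coord_succ hk (d := !par (xs (i + 1))) (by simp)
      exact Or.inr ⟨i, rfl, by omega⟩

lemma lt_prev_of_lt (hT : IsSStd par T) (h : BumpSeq ε par T x b xs m) {l : ℕ}
    {u : ℕ × ℕ} (hl : l < m) (hu : T u = xs l) (hub : ∀ j < m, u ≠ b j)
    (hlt : coord (!par (xs l)) u < coord (!par (xs l)) (b l)) :
    (l = 0 ∧ ε = false) ∨
      ∃ i, l = i + 1 ∧ coord (!par (xs l)) u < coord (!par (xs l)) (b i) := by
  cases ε
  · obtain _ | i := l
    · exact Or.inl ⟨rfl, rfl⟩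
    · exact Or.inr ⟨i, rfl, hlt.trans_le (h.coord_le_prev hT hl (by simp))⟩
  · have hd : Bool.xor true (par (xs l)) = !par (xs l) := by simp
    obtain _ | i := l
    · have := h.coord_zero hd; omega
    · have := h.coord_succ hl hd
      exact Or.inr ⟨i, rfl, lt_of_le_of_ne (by omega)
        (hT.coord_ne hu (h.bump hl) (hub i (by omega)))⟩

end BumpSeq

end Insertion

lemma superPrec_iff_of_par_eq {A : Type*} [LinearOrder A] {par : A → Bool} {p q : A}
    (h : par p = par q) : SuperPrec par p q ↔ if par p then q < p else p < q := by
  rw [SuperPrec, ← h]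
  cases par p <;> simp

lemma eq_coe_of_map_eq {U : ℕ × ℕ → WithTop (X ×ₗ ℕ)} {T : ℕ × ℕ → WithTop X}
    {u : ℕ × ℕ} {p : X ×ₗ ℕ} (hmap : (U u).map (fun p => (ofLex p).1) = T u)
    (h : U u = p) : T u = (ofLex p).1 := by
  rw [← hmap, h]; rfl

section Standardization

variable [LinearOrder X] {par : X → Bool} {U V : ℕ × ℕ → WithTop (X ×ₗ ℕ)}
  {T S : ℕ × ℕ → WithTop X} {ε : Bool} {y : X ×ₗ ℕ}

/-- The hypothesis of the theorem on `y`, with `≺` unfolded. -/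
def BreaksTie (ε : Bool) (y q : X ×ₗ ℕ) : Prop :=
  (ofLex q).1 = (ofLex y).1 → if ε then y < q else q < y

lemma breaksTie_of_superPrec {q : X ×ₗ ℕ}
    (h : (ofLex q).1 = (ofLex y).1 → if Bool.xor ε (bpar par y) = false
      then SuperPrec (bpar par) q y else SuperPrec (bpar par) y q) :
    BreaksTie ε y q := by
  intro heq
  have hpar : bpar par q = bpar par y := by simp [bpar, heq]
  have := h heq
  rw [superPrec_iff_of_par_eq hpar, superPrec_iff_of_par_eq hpar.symm, hpar] at this
  cases ε <;> cases hy : bpar par y <;> simpa [hy] using this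

lemma BreaksTie.ne {q : X ×ₗ ℕ} (h : BreaksTie ε y q) : q ≠ y := by
  rintro rfl
  have := h rfl
  split_ifs at this <;> exact lt_irrefl _ this

lemma cmpIns_iff_of_breaksTie {v : WithTop (X ×ₗ ℕ)}
    (h : ∀ q : X ×ₗ ℕ, v = q → BreaksTie ε y q) :
    cmpIns ε y v ↔ cmpIns ε (ofLex y).1 (v.map fun p => (ofLex p).1) := by
  cases v with
  | top => exact iff_of_true (cmpIns_top ε y) (cmpIns_top ε _)
  | coe q =>
    simp only [WithTop.map_coe]
    rcases lt_trichotomy (ofLex y).1 (ofLex q).1 with hlt | heq | hgt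
    · exact iff_of_true (cmpIns_of_lt (WithTop.coe_lt_coe.2 (Prod.Lex.lt_iff.2 (Or.inl hlt))))
        (cmpIns_of_lt (WithTop.coe_lt_coe.2 hlt))
    · have htie := h q rfl heq.symm
      cases ε
      · simp only [Bool.false_eq_true, if_false] at htie
        exact iff_of_false (fun hc => (WithTop.coe_lt_coe.1 (cmpIns_false.1 hc)).asymm htie)
          (fun hc => by rw [cmpIns_false, heq] at hc; exact lt_irrefl _ hc)
      · simp only [if_true] at htie
        exact iff_of_true (cmpIns_true.2 (WithTop.coe_le_coe.2 htie.le))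
          (cmpIns_true.2 (by rw [heq]))
    · exact iff_of_false
        (fun hc => hgt.not_ge (Prod.Lex.monotone_fst _ _ (WithTop.coe_le_coe.1 (le_of_cmpIns hc))))
        (fun hc => hgt.not_ge (WithTop.coe_le_coe.1 (le_of_cmpIns hc)))

/-- The copies of a letter in a semistandard tableau form a horizontal (even letter) or vertical
(odd letter) strip. Given semistandardness, this is equivalent to the `≺` condition of
`IsBulletStd`. -/
def IsStripOrdered (par : X → Bool) (U : ℕ × ℕ → WithTop (X ×ₗ ℕ)) : Prop :=
  ∀ u v : ℕ × ℕ, ∀ p q : X ×ₗ ℕ, U u = p → U v = q → (ofLex p).1 = (ofLex q).1 →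
    coord (!par (ofLex p).1) u < coord (!par (ofLex p).1) v → p < q

lemma IsBulletStd.isStripOrdered (hUT : IsBulletStd par U T) : IsStripOrdered par U := by
  intro u v p q hu hv hpq hlt
  have hTu := eq_coe_of_map_eq (hUT.2.2.1 u) hu
  have hTv : T v = (ofLex p).1 := hpq ▸ eq_coe_of_map_eq (hUT.2.2.1 v) hv
  have hne : u ≠ v := by rintro rfl; exact lt_irrefl _ hlt
  have hge : coord (par (ofLex p).1) v ≤ coord (par (ofLex p).1) u :=
    not_lt.1 fun h => (hUT.2.1.coord_lt_of_coord_lt hTu hTv h).asymm hlt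
  have hpar : bpar par p = bpar par q := by simp [bpar, hpq]
  cases hπ : par (ofLex p).1
  · simp only [hπ, coord, Bool.not_false, Bool.false_eq_true, if_true, if_false] at hlt hge
    have := hUT.2.2.2 u v p q hne hge hlt.le hu hv hpq
    rwa [superPrec_iff_of_par_eq hpar, bpar, hπ, if_neg (by simp)] at this
  · simp only [hπ, coord, Bool.not_true, Bool.false_eq_true, if_true, if_false] at hlt hge
    have := hUT.2.2.2 v u q p hne.symm hlt.le hge hv hu hpq.symm
    rwa [superPrec_iff_of_par_eq hpar.symm, bpar, ← hpq, hπ, if_pos rfl] at this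

lemma IsStripOrdered.lt_of_coord_le (hstrip : IsStripOrdered par V) (hS : IsSStd par S)
    (hmap : ∀ u, (V u).map (fun p => (ofLex p).1) = S u) {u v : ℕ × ℕ} {p q : X ×ₗ ℕ}
    (hu : V u = p) (hv : V v = q) (hpq : (ofLex p).1 = (ofLex q).1) (hne : u ≠ v)
    (hle : coord (!par (ofLex p).1) u ≤ coord (!par (ofLex p).1) v) : p < q :=
  hstrip _ _ _ _ hu hv hpq (hle.lt_of_ne (hS.coord_ne (eq_coe_of_map_eq (hmap u) hu)
    (hpq ▸ eq_coe_of_map_eq (hmap v) hv) hne))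

lemma IsStripOrdered.monotone (hstrip : IsStripOrdered par V) (hS : IsSStd par S)
    (hmap : ∀ u, (V u).map (fun p => (ofLex p).1) = S u) : Monotone V := by
  intro u v huv
  cases hv : V v with
  | top => exact le_top
  | coe q =>
    have hSv := eq_coe_of_map_eq (hmap v) hv
    cases hu : V u with
    | top =>
      have := hS.monotone huv
      rw [← hmap u, hu, hSv] at this
      exact absurd this (by simp)
    | coe p =>
      rw [WithTop.coe_le_coe]
      have hle : (ofLex p).1 ≤ (ofLex q).1 :=
        WithTop.coe_le_coe.1 (eq_coe_of_map_eq (hmap u) hu ▸ hSv ▸ hS.monotone huv)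
      rcases hle.lt_or_eq with hlt | heq
      · exact (Prod.Lex.lt_iff.2 (Or.inl hlt)).le
      · by_cases huv' : u = v
        · subst huv'
          rw [hu, WithTop.coe_inj] at hv
          exact hv.le
        · exact (hstrip.lt_of_coord_le hS hmap hu hv heq huv' (coord_le_coord _ huv)).le

lemma isBulletStd_of_isStripOrdered (hS : IsSStd par S)
    (hmap : ∀ u, (V u).map (fun p => (ofLex p).1) = S u)
    (hinj : ∀ u v (p : X ×ₗ ℕ), V u = p → V v = p → u = v)
    (hstrip : IsStripOrdered par V) : IsBulletStd par V S := by
  have distinct : ∀ (u v : ℕ × ℕ) (e : Bool) (p : X ×ₗ ℕ), coord e u < coord e v →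
      V u = p → V v = p → False := fun u v e p h hu hv => by
    obtain rfl := hinj u v p hu hv; exact lt_irrefl _ h
  refine ⟨⟨⟨fun u v h1 h2 => hstrip.monotone hS hmap (Prod.le_def.2 ⟨h1, h2⟩),
    fun u v p _ h2 hu hv => (distinct u v true p h2 hu hv).elim,
    fun u v p _ h2 hu hv => (distinct u v false p h2 hu hv).elim⟩, hinj⟩, hS, hmap, ?_⟩
  intro u v p q hne h1 h2 hu hv hpq
  have hpar : bpar par p = bpar par q := by simp [bpar, hpq]
  rw [superPrec_iff_of_par_eq hpar]
  cases hπ : par (ofLex p).1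
  · simp only [bpar, hπ, Bool.false_eq_true, if_false]
    exact hstrip.lt_of_coord_le hS hmap hu hv hpq hne (by simpa [hπ, coord] using h2)
  · simp only [bpar, hπ, if_true]
    exact hstrip.lt_of_coord_le hS hmap hv hu hpq.symm hne.symm
      (by rw [← hpq, hπ]; simpa [coord] using h1)

end Standardization

section Compatibility

variable [LinearOrder X] {par : X → Bool} {U V : ℕ × ℕ → WithTop (X ×ₗ ℕ)}
  {T S : ℕ × ℕ → WithTop X} {ε : Bool} {y : X ×ₗ ℕ} {b : ℕ → ℕ × ℕ}
  {xs : ℕ → X ×ₗ ℕ} {m : ℕ}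

lemma BumpSeq.breaksTie (hUT : IsBulletStd par U T)
    (hy : ∀ u (q : X ×ₗ ℕ), U u = q → BreaksTie ε y q)
    (hb : BumpSeq ε (bpar par) U y b xs m)
    {j : ℕ} (hj : j < m) {w : ℕ × ℕ}
    (hw : coord (Bool.xor ε (bpar par (xs j))) w = coord (Bool.xor ε (bpar par (xs j))) (b j))
    {q : X ×ₗ ℕ} (hq : U w = q) : BreaksTie ε (xs j) q := by
  obtain _ | i := j
  · exact hb.first ▸ hy w q hq
  intro heq
  have hbi := hb.bump hj
  have hTb := eq_coe_of_map_eq (hUT.2.2.1 _) hbi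
  have hTw : T w = (ofLex (xs (i + 1))).1 := heq ▸ eq_coe_of_map_eq (hUT.2.2.1 w) hq
  have hs := hb.coord_succ hj rfl
  rw [← hw] at hs
  cases ε
  · simp only [bpar, Bool.false_xor] at hs
    have := hUT.2.1.coord_lt_of_coord_lt hTb hTw (by omega)
    simpa using hUT.isStripOrdered w (b i) q (xs (i + 1)) hq hbi heq (heq ▸ this)
  · simp only [bpar, Bool.true_xor] at hs
    simpa using hUT.isStripOrdered (b i) w (xs (i + 1)) q hbi hq heq.symm (by omega)

lemma BumpSeq.node_eq_of_coord_eq (hUT : IsBulletStd par U T)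
    (hy : ∀ u (q : X ×ₗ ℕ), U u = q → BreaksTie ε y q)
    (hb : BumpSeq ε (bpar par) U y b xs m)
    {b' : ℕ → ℕ × ℕ} {xs' : ℕ → X} {m' : ℕ}
    (hb' : BumpSeq ε par T (ofLex y).1 b' xs' m')
    {j : ℕ} (hj : j < m) (hj' : j < m') (hx : (ofLex (xs j)).1 = xs' j)
    (hline : coord (Bool.xor ε (par (xs' j))) (b j) = coord (Bool.xor ε (par (xs' j))) (b' j)) :
    b j = b' j := by
  have hd : Bool.xor ε (bpar par (xs j)) = Bool.xor ε (par (xs' j)) := by rw [bpar, hx]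
  have hiff : ∀ w,
      coord (Bool.xor ε (par (xs' j))) w = coord (Bool.xor ε (par (xs' j))) (b j) →
      (cmpIns ε (xs j) (U w) ↔ cmpIns ε (xs' j) (T w)) := by
    intro w hw
    rw [← hx, ← hUT.2.2.1 w]
    exact cmpIns_iff_of_breaksTie fun q hq => hb.breaksTie hUT hy hj (hd ▸ hw) hq
  exact ext_coord hline (le_antisymm
    (hb.min hj hd hline.symm ((hiff _ hline.symm).2 (hb'.cmp hj')))
    (hb'.min hj' rfl hline ((hiff _ rfl).1 (hb.cmp hj))))

lemma BumpSeq.agree (hUT : IsBulletStd par U T)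
    (hy : ∀ u (q : X ×ₗ ℕ), U u = q → BreaksTie ε y q)
    (hb : BumpSeq ε (bpar par) U y b xs m)
    {b' : ℕ → ℕ × ℕ} {xs' : ℕ → X} {m' : ℕ}
    (hb' : BumpSeq ε par T (ofLex y).1 b' xs' m') :
    m = m' ∧ ∀ j < m, (ofLex (xs j)).1 = xs' j ∧ b j = b' j := by
  have agree : ∀ j, j < m → j < m' → (ofLex (xs j)).1 = xs' j ∧ b j = b' j := by
    intro j
    induction j with
    | zero =>
      intro hj hj'
      have hx : (ofLex (xs 0)).1 = xs' 0 := by rw [hb.first, hb'.first]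
      refine ⟨hx, hb.node_eq_of_coord_eq hUT hy hb' hj hj' hx ?_⟩
      rw [hb'.coord_zero rfl, hb.coord_zero (by rw [bpar, hx])]
    | succ i ih =>
      intro hj hj'
      obtain ⟨-, hbi⟩ := ih (by omega) (by omega)
      have hx : (ofLex (xs (i + 1))).1 = xs' (i + 1) := by
        have := eq_coe_of_map_eq (hUT.2.2.1 (b i)) (hb.bump hj)
        rw [hbi, hb'.bump hj', WithTop.coe_inj] at this
        exact this.symm
      refine ⟨hx, hb.node_eq_of_coord_eq hUT hy hb' hj hj' hx ?_⟩
      rw [hb.coord_succ hj (by rw [bpar, hx]), hb'.coord_succ hj' rfl, hbi]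
  have hmap : ∀ u, (U u).map (fun p => (ofLex p).1) = T u := hUT.2.2.1
  have := hb.pos
  have := hb'.pos
  -- the insertion that stops first reaches an empty node where the other one bumps a letter
  obtain rfl : m = m' := by
    rcases lt_trichotomy m m' with hlt | heq | hlt
    · have hbm := (agree (m - 1) (by omega) (by omega)).2
      have := hb'.bump (j := m - 1) (by omega)
      rw [← hbm, ← hmap, hb.last] at this
      exact (WithTop.coe_ne_top this.symm).elim
    · exact heq
    · have hbm := (agree (m' - 1) (by omega) (by omega)).2
      have := eq_coe_of_map_eq (hmap _) (hb.bump (j := m' - 1) (by omega))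
      rw [hbm, hb'.last] at this
      exact (WithTop.coe_ne_top this.symm).elim
  exact ⟨rfl, fun j hj => agree j hj hj⟩

lemma isStripOrdered_insResult (hUT : IsBulletStd par U T)
    (hy : ∀ u (q : X ×ₗ ℕ), U u = q → BreaksTie ε y q)
    (hb : BumpSeq ε (bpar par) U y b xs m)
    (hbT : BumpSeq ε par T (ofLex y).1 b (fun j => (ofLex (xs j)).1) m)
    (hV : InsResult U b xs m V) : IsStripOrdered par V := by
  have hstrip := hUT.isStripOrdered
  have hTof : ∀ {w : ℕ × ℕ} {q : X ×ₗ ℕ}, U w = q → T w = (ofLex q).1 :=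
    fun h => eq_coe_of_map_eq (hUT.2.2.1 _) h
  intro u v p q hu hv hpq hlt
  rcases hV.cases u with ⟨k, hk, rfl, hu'⟩ | ⟨hub, hu'⟩ <;>
    rcases hV.cases v with ⟨l, hl, rfl, hv'⟩ | ⟨hvb, hv'⟩
  · rw [hu', WithTop.coe_inj] at hu
    rw [hv', WithTop.coe_inj] at hv
    subst hu hv
    rcases lt_trichotomy k l with hkl | rfl | hkl
    · exact hb.xs_strictMono hUT.1.2 (fun u hu => (hy u y hu).ne rfl) hkl hl
    · exact (lt_irrefl _ hlt).elim
    · exact ((hbT.eq_true_and_coord_lt hkl hk hpq.symm).2.asymm hlt).elim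
  · rw [hu', WithTop.coe_inj] at hu
    subst hu
    rw [hv'] at hv
    rcases hbT.prev_lt_of_lt hUT.2.1 hk (hpq ▸ hTof hv) hvb hlt with
      ⟨rfl, rfl⟩ | ⟨i, rfl, hlt'⟩
    · simpa [hb.first] using hy v q hv (by rw [← hpq, hb.first])
    · exact hstrip _ _ _ _ (hb.bump hk) hv hpq hlt'
  · rw [hv', WithTop.coe_inj] at hv
    subst hv
    rw [hu'] at hu
    rw [hpq] at hlt
    rcases hbT.lt_prev_of_lt hUT.2.1 hl (hpq ▸ hTof hu) hub hlt with
      ⟨rfl, rfl⟩ | ⟨i, rfl, hlt'⟩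
    · simpa [hb.first] using hy u p hu (by rw [hpq, hb.first])
    · exact hstrip _ _ _ _ hu (hb.bump hl) hpq (hpq ▸ hlt')
  · exact hstrip u v p q (hu' ▸ hu) (hv' ▸ hv) hpq hlt

lemma isBulletStd_insResult (hUT : IsBulletStd par U T)
    (hy : ∀ u (q : X ×ₗ ℕ), U u = q → BreaksTie ε y q)
    (hb : BumpSeq ε (bpar par) U y b xs m)
    (hbT : BumpSeq ε par T (ofLex y).1 b (fun j => (ofLex (xs j)).1) m)
    (hV : InsResult U b xs m V) (hS : InsResult T b (fun j => (ofLex (xs j)).1) m S) :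
    IsBulletStd par V S := by
  have hmap : ∀ u, (V u).map (fun p => (ofLex p).1) = S u := by
    intro u
    rcases hV.cases u with ⟨k, hk, rfl, hVu⟩ | ⟨hu, hVu⟩
    · rw [hVu, hS.1 k hk]; rfl
    · rw [hVu, hS.2 u hu, hUT.2.2.1]
  exact isBulletStd_of_isStripOrdered (hbT.isSStd_insResult hUT.2.1 hS) hmap
    (fun _ _ _ => hb.injective_insResult hUT.1.2 (fun u hu => (hy u y hu).ne rfl) hV)
    (isStripOrdered_insResult hUT hy hb hbT hV)

end Compatibility

/-- Standardization compatibility of insertion: if `y ∈ X•` is `≻` (resp. `≺`) every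
letter of `U` with the same underlying letter, when `ε` plus the parity of `y` is `0`
(resp. `1`), then inserting `y` into `U` and inserting the underlying letter of `y`
into `T` have identical bumped node sequences, and the resulting tableaux form a
`•`-standardization pair. -/
theorem stmt15 [LinearOrder X] (ε : Bool) (par : X → Bool)
    (U : ℕ × ℕ → WithTop (X ×ₗ ℕ)) (T : ℕ × ℕ → WithTop X)
    (hUT : IsBulletStd par U T) (y : X ×ₗ ℕ)
    (hy : ∀ (u : ℕ × ℕ) (p : X ×ₗ ℕ), U u = (p : WithTop (X ×ₗ ℕ)) →
      (ofLex p).1 = (ofLex y).1 →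
      (if Bool.xor ε (bpar par y) = false then SuperPrec (bpar par) p y
       else SuperPrec (bpar par) y p))
    (b : ℕ → ℕ × ℕ) (xs : ℕ → X ×ₗ ℕ) (m : ℕ)
    (hb : BumpSeq ε (bpar par) U y b xs m)
    (b' : ℕ → ℕ × ℕ) (xs' : ℕ → X) (m' : ℕ)
    (hb' : BumpSeq ε par T ((ofLex y).1) b' xs' m') :
    m = m' ∧ (∀ j, j < m → b j = b' j) ∧
    ∀ (V : ℕ × ℕ → WithTop (X ×ₗ ℕ)) (S : ℕ × ℕ → WithTop X),
      InsResult U b xs m V → InsResult T b' xs' m' S → IsBulletStd par V S := by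
  have hy' : ∀ u (q : X ×ₗ ℕ), U u = q → BreaksTie ε y q :=
    fun u q hq => breaksTie_of_superPrec (hy u q hq)
  obtain ⟨rfl, hagree⟩ := hb.agree hUT hy' hb'
  refine ⟨rfl, fun j hj => (hagree j hj).2, fun V S hV hS => ?_⟩
  have hbb : ∀ j < m, b' j = b j := fun j hj => (hagree j hj).2.symm
  have hxx : ∀ j < m, xs' j = (ofLex (xs j)).1 := fun j hj => (hagree j hj).1.symm
  exact isBulletStd_insResult hUT hy' hb (hb'.congr hbb hxx) hV (hS.congr hbb hxx)

end SuperRSK
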